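/- arXiv:1910.04815 — 2 statements merged into one kernel-verified Lean document; each statement's English description precedes it below -/
import Mathlib

section
/- Let p ≥ 2 and N ∈ ℕ. There exists a constant c > 0 depending only on p and N such that for all vectors a, b ∈ ℝ^N, (|a|^(p-2)·a − |b|^(p-2)·b) · (a − b) ≥ c·|a − b|^p. -/
/-!
Write `α = ‖a‖^(p-2)`, `β = ‖b‖^(p-2)`. Polarization gives
`⟪α a - β b, a - b⟫ = (α + β)/2 ‖a - b‖² + (α - β)(‖a‖² - ‖b‖²)/2`,
and the last term is nonnegative because `t ↦ t^(p-2)` is monotone on `[0, ∞)`.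
Finally `‖a - b‖^(p-2) ≤ (‖a‖ + ‖b‖)^(p-2) ≤ 2^(p-2) (α + β)`, so the inequality holds
with `c = 2^(1-p)`.
-/

open Real
open scoped RealInnerProductSpace

lemma Real.add_rpow_le_two_rpow_mul_add_rpow {x y q : ℝ} (hx : 0 ≤ x) (hy : 0 ≤ y)
    (hq : 0 ≤ q) : (x + y) ^ q ≤ 2 ^ q * (x ^ q + y ^ q) := by
  have hxy : x + y ≤ 2 * max x y := by
    linarith [le_max_left x y, le_max_right x y]
  calc (x + y) ^ q ≤ (2 * max x y) ^ q := rpow_le_rpow (by positivity) hxy hq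
    _ = 2 ^ q * max (x ^ q) (y ^ q) := by
      rw [mul_rpow zero_le_two (le_max_of_le_left hx), rpow_max hx hy hq]
    _ ≤ 2 ^ q * (x ^ q + y ^ q) := by
      gcongr
      exact max_le_add_of_nonneg (rpow_nonneg hx q) (rpow_nonneg hy q)

section InnerProductSpace

variable {E : Type*} [NormedAddCommGroup E] [InnerProductSpace ℝ E]

lemma real_inner_smul_sub_smul_sub (α β : ℝ) (a b : E) :
    ⟪α • a - β • b, a - b⟫ =
      (α + β) / 2 * ‖a - b‖ ^ 2 + (α - β) * (‖a‖ ^ 2 - ‖b‖ ^ 2) / 2 := by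
  simp only [inner_sub_left, inner_sub_right, real_inner_smul_left,
    real_inner_self_eq_norm_sq, norm_sub_sq_real, real_inner_comm a b]
  ring

lemma rpow_norm_sub_mul_sq_le_real_inner {q : ℝ} (hq : 0 ≤ q) (a b : E) :
    ‖a - b‖ ^ q * ‖a - b‖ ^ 2 ≤
      2 ^ (q + 1) * ⟪‖a‖ ^ q • a - ‖b‖ ^ q • b, a - b⟫ := by
  set α := ‖a‖ ^ q
  set β := ‖b‖ ^ q
  have hmono : 0 ≤ (α - β) * (‖a‖ ^ 2 - ‖b‖ ^ 2) := by
    rcases le_total ‖a‖ ‖b‖ with h | h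
    · exact mul_nonneg_of_nonpos_of_nonpos
        (sub_nonpos.2 (rpow_le_rpow (norm_nonneg a) h hq))
        (sub_nonpos.2 (pow_le_pow_left₀ (norm_nonneg a) h 2))
    · exact mul_nonneg
        (sub_nonneg.2 (rpow_le_rpow (norm_nonneg b) h hq))
        (sub_nonneg.2 (pow_le_pow_left₀ (norm_nonneg b) h 2))
  have hdist : ‖a - b‖ ^ q ≤ 2 ^ q * (α + β) :=
    (rpow_le_rpow (norm_nonneg _) (norm_sub_le a b) hq).trans
      (add_rpow_le_two_rpow_mul_add_rpow (norm_nonneg a) (norm_nonneg b) hq)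
  calc ‖a - b‖ ^ q * ‖a - b‖ ^ 2 ≤ 2 ^ q * (α + β) * ‖a - b‖ ^ 2 := by gcongr
    _ ≤ 2 ^ q * ((α + β) * ‖a - b‖ ^ 2 + (α - β) * (‖a‖ ^ 2 - ‖b‖ ^ 2)) := by
      rw [mul_assoc]; gcongr; linarith
    _ = 2 ^ (q + 1) * ⟪α • a - β • b, a - b⟫ := by
      rw [real_inner_smul_sub_smul_sub, rpow_add_one two_ne_zero]; ring

theorem two_rpow_one_sub_mul_norm_sub_rpow_le_real_inner {p : ℝ} (hp : 2 ≤ p) (a b : E) :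
    2 ^ (1 - p) * ‖a - b‖ ^ p ≤ ⟪‖a‖ ^ (p - 2) • a - ‖b‖ ^ (p - 2) • b, a - b⟫ := by
  have hq : 0 ≤ p - 2 := by linarith
  have hsplit : ‖a - b‖ ^ p = ‖a - b‖ ^ (p - 2) * ‖a - b‖ ^ 2 := by
    rw [← rpow_natCast, ← rpow_add_of_nonneg (norm_nonneg _) hq (by norm_num)]
    norm_num
  have hcancel : (2 : ℝ) ^ (1 - p) * 2 ^ (p - 2 + 1) = 1 := by
    rw [← rpow_add two_pos, show 1 - p + (p - 2 + 1) = 0 by ring, rpow_zero]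
  calc 2 ^ (1 - p) * ‖a - b‖ ^ p
      ≤ 2 ^ (1 - p) * (2 ^ (p - 2 + 1) * ⟪‖a‖ ^ (p - 2) • a - ‖b‖ ^ (p - 2) • b, a - b⟫) := by
        rw [hsplit]
        exact mul_le_mul_of_nonneg_left (rpow_norm_sub_mul_sq_le_real_inner hq a b)
          (rpow_nonneg zero_le_two _)
    _ = ⟪‖a‖ ^ (p - 2) • a - ‖b‖ ^ (p - 2) • b, a - b⟫ := by
        rw [← mul_assoc, hcancel, one_mul]

end InnerProductSpace

theorem stmt_2 (p : ℝ) (hp : 2 ≤ p) (N : ℕ) :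
    ∃ c > (0 : ℝ), ∀ a b : EuclideanSpace ℝ (Fin N),
      c * ‖a - b‖ ^ p ≤
        inner ℝ ((‖a‖ ^ (p - 2) : ℝ) • a - (‖b‖ ^ (p - 2) : ℝ) • b) (a - b) :=
  ⟨2 ^ (1 - p), rpow_pos_of_pos two_pos _,
    two_rpow_one_sub_mul_norm_sub_rpow_le_real_inner hp⟩
end

section
/- Let 1 < p < 2 and N ∈ ℕ. There exists a constant c > 0 depending only on p and N such that for all vectors a, b ∈ ℝ^N with (a, b) ≠ (0, 0), (|a|^(p-2)·a − |b|^(p-2)·b) · (a − b) ≥ c·|a − b|^2 / (|a| + |b|)^(2−p). -/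
/-!
Write `x = ‖a‖`, `y = ‖b‖`, `t = ⟪a, b⟫`. Both sides of the inequality, with `c = p - 1`, are
affine in `t`, and `t` ranges over `[-x y, x y]`, so it suffices to check the two endpoints.
At `t = x y` the inequality is the one-dimensional one,
`(x^(p-1) - y^(p-1)) (x - y) ≥ (p - 1) (x - y)² (x + y)^(p-2)`, which follows from the concavity of
`s ↦ s^(p-1)` (Bernoulli's inequality) and the monotonicity of `s ↦ s^(p-2)`.
At `t = -x y` the right-hand side is `(x^(p-1) + y^(p-1)) (x + y) ≥ (x + y)^p`, again because
`s ↦ s^(p-2)` is decreasing.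
-/

open Real

namespace Real

variable {p x y : ℝ}

/-- Stated with the extra factor `x` because `0 ^ (p - 2) = 0`. -/
lemma rpow_sub_two_mul_le_of_le (hp : p ≤ 2) (hx : 0 ≤ x) (hxy : x ≤ y) :
    y ^ (p - 2) * x ≤ x ^ (p - 2) * x := by
  rcases hx.eq_or_lt with rfl | hx
  · simp
  · exact mul_le_mul_of_nonneg_right (rpow_le_rpow_of_nonpos hx hxy (by linarith)) hx.le

lemma mul_sub_mul_rpow_sub_one_le_rpow_sub_rpow {q : ℝ} (hq0 : 0 ≤ q) (hq1 : q ≤ 1)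
    (hx : 0 < x) (hy : 0 ≤ y) :
    q * (x - y) * x ^ (q - 1) ≤ x ^ q - y ^ q := by
  have hbern := rpow_one_add_le_one_add_mul_self (s := y / x - 1)
    (by linarith [div_nonneg hy hx.le]) hq0 hq1
  rw [add_sub_cancel, div_rpow hy hx.le, div_le_iff₀ (rpow_pos_of_pos hx q)] at hbern
  have hexpand : (1 + q * (y / x - 1)) * x ^ q = x ^ q - q * (x - y) * (x ^ q / x) := by
    field_simp
    ring
  rw [rpow_sub_one hx.ne']
  linarith

lemma sub_sq_mul_add_rpow_le_of_nonneg (hp1 : 1 < p) (hp2 : p ≤ 2) (hx : 0 ≤ x) (hy : 0 ≤ y) :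
    (p - 1) * (x - y) ^ 2 * (x + y) ^ (p - 2) ≤
      (x ^ (p - 2) * x - y ^ (p - 2) * y) * (x - y) := by
  wlog hyx : y ≤ x generalizing x y
  · calc (p - 1) * (x - y) ^ 2 * (x + y) ^ (p - 2)
        = (p - 1) * (y - x) ^ 2 * (y + x) ^ (p - 2) := by rw [add_comm]; ring
      _ ≤ (y ^ (p - 2) * y - x ^ (p - 2) * x) * (y - x) := this hy hx (le_of_not_ge hyx)
      _ = (x ^ (p - 2) * x - y ^ (p - 2) * y) * (x - y) := by ring
  rcases hx.eq_or_lt with rfl | hx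
  · obtain rfl : y = 0 := le_antisymm hyx hy
    simp
  have hsub : 0 ≤ x - y := sub_nonneg.mpr hyx
  have hconcave := mul_sub_mul_rpow_sub_one_le_rpow_sub_rpow (q := p - 1) (by linarith)
    (by linarith) hx hy
  rw [sub_sub, one_add_one_eq_two] at hconcave
  have hmono : (x + y) ^ (p - 2) ≤ x ^ (p - 2) :=
    rpow_le_rpow_of_nonpos hx (by linarith) (by linarith)
  have hp21 : p - 2 + 1 ≠ 0 := by linarith
  rw [← rpow_add_one' hx.le hp21, ← rpow_add_one' hy hp21, show p - 2 + 1 = p - 1 by ring]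
  calc (p - 1) * (x - y) ^ 2 * (x + y) ^ (p - 2)
      ≤ (p - 1) * (x - y) ^ 2 * x ^ (p - 2) :=
        mul_le_mul_of_nonneg_left hmono (by nlinarith)
    _ = (p - 1) * (x - y) * x ^ (p - 2) * (x - y) := by ring
    _ ≤ (x ^ (p - 1) - y ^ (p - 1)) * (x - y) := mul_le_mul_of_nonneg_right hconcave hsub

lemma add_sq_mul_add_rpow_le_of_nonneg (hp2 : p ≤ 2) (hx : 0 ≤ x) (hy : 0 ≤ y) :
    (x + y) ^ 2 * (x + y) ^ (p - 2) ≤ (x ^ (p - 2) * x + y ^ (p - 2) * y) * (x + y) := by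
  have hxs := rpow_sub_two_mul_le_of_le hp2 hx (le_add_of_nonneg_right hy)
  have hys := rpow_sub_two_mul_le_of_le hp2 hy (le_add_of_nonneg_left hx)
  nlinarith

lemma simon_bound_of_abs_le {t : ℝ} (hp1 : 1 < p) (hp2 : p ≤ 2) (hx : 0 ≤ x) (hy : 0 ≤ y)
    (ht : |t| ≤ x * y) :
    (p - 1) * (x ^ 2 - 2 * t + y ^ 2) * (x + y) ^ (p - 2) ≤
      x ^ (p - 2) * (x ^ 2 - t) + y ^ (p - 2) * (y ^ 2 - t) := by
  set X := (x + y) ^ (p - 2)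
  have hX : 0 ≤ X := rpow_nonneg (add_nonneg hx hy) _
  obtain ⟨hlow, hupp⟩ := abs_le.mp ht
  have hpos := sub_sq_mul_add_rpow_le_of_nonneg hp1 hp2 hx hy
  have hneg := add_sq_mul_add_rpow_le_of_nonneg hp2 hx hy
  have hneg' : (p - 1) * (x + y) ^ 2 * X ≤ (x + y) ^ 2 * X :=
    mul_le_mul_of_nonneg_right (mul_le_of_le_one_left (sq_nonneg _) (by linarith)) hX
  -- both sides are affine in `t`; compare at the endpoint selected by the sign of the slope
  rcases le_total 0 (2 * (p - 1) * X - (x ^ (p - 2) + y ^ (p - 2))) with hs | hs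
  · nlinarith [mul_nonneg hs (neg_le_iff_add_nonneg.mp hlow)]
  · nlinarith [mul_nonneg (neg_nonneg.mpr hs) (sub_nonneg.mpr hupp)]

end Real

section InnerProductSpace

variable {E : Type*} [NormedAddCommGroup E] [InnerProductSpace ℝ E]

lemma inner_rpow_smul_sub_rpow_smul (p : ℝ) (a b : E) :
    inner ℝ (‖a‖ ^ (p - 2) • a - ‖b‖ ^ (p - 2) • b) (a - b) =
      ‖a‖ ^ (p - 2) * (‖a‖ ^ 2 - inner ℝ a b) + ‖b‖ ^ (p - 2) * (‖b‖ ^ 2 - inner ℝ a b) := by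
  simp only [inner_sub_left, inner_sub_right, real_inner_smul_left, real_inner_self_eq_norm_sq,
    real_inner_comm a b]
  ring

theorem simon_inequality {p : ℝ} (hp1 : 1 < p) (hp2 : p ≤ 2) (a b : E) :
    (p - 1) * ‖a - b‖ ^ 2 * (‖a‖ + ‖b‖) ^ (p - 2) ≤
      inner ℝ (‖a‖ ^ (p - 2) • a - ‖b‖ ^ (p - 2) • b) (a - b) := by
  rw [inner_rpow_smul_sub_rpow_smul, norm_sub_sq_real]
  exact simon_bound_of_abs_le hp1 hp2 (norm_nonneg a) (norm_nonneg b) (abs_real_inner_le_norm a b)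

end InnerProductSpace

theorem stmt_3 (p : ℝ) (hp1 : 1 < p) (hp2 : p < 2) (N : ℕ) :
    ∃ c > (0 : ℝ), ∀ a b : EuclideanSpace ℝ (Fin N), ¬(a = 0 ∧ b = 0) →
      c * ‖a - b‖ ^ 2 / (‖a‖ + ‖b‖) ^ (2 - p) ≤
        inner ℝ ((‖a‖ ^ (p - 2) : ℝ) • a - (‖b‖ ^ (p - 2) : ℝ) • b) (a - b) := by
  refine ⟨p - 1, by linarith, fun a b _ => ?_⟩
  rw [div_eq_mul_inv, ← rpow_neg (by positivity), neg_sub]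
  exact simon_inequality hp1 hp2.le a b
end
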